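/- Let f be a continuous function ℂ → ℂ, p ≥ 1, α > 0, with ∫_ℂ |f(z)|^p e^{-αp|z|²/2} dA(z) < ∞. For 0 < r < 1 let f_r(z) = f(rz). Then lim_{r→1⁻} ∫_ℂ |f_r(z) - f(z)|^p e^{-αp|z|²/2} dA(z) = 0. -/

import Mathlib

/-!
Write `dμ = e^{-αp|z|²/2} dA`. Since `‖f(r·) - f‖ᵖ ≤ 2^{p-1}(‖f(r·)‖ᵖ + ‖f‖ᵖ)` and the right side
converges pointwise, Fatou's lemma applied to the difference turns pointwise convergence
`f(rz) → f(z)` plus convergence of the norms `‖f(r·)‖_{L^p(μ)} → ‖f‖_{L^p(μ)}` into convergence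
in `L^p(μ)`. The norms converge because the substitution `z ↦ z / r` gives
`∫ |f(rz)|ᵖ e^{-αp|z|²/2} dA = r⁻² ∫ |f(z)|ᵖ e^{-αp|z|²/(2r²)} dA`, and for `r < 1` the new weight
is dominated by the old one, so dominated convergence applies.
-/

open MeasureTheory Filter Topology Module
open scoped ENNReal

section GeneralizedDominatedConvergence

variable {α ι : Type*} [MeasurableSpace α] {μ : Measure α} {l : Filter ι} [l.IsCountablyGenerated]
  [l.NeBot]

theorem tendsto_lintegral_zero_of_le_of_tendsto_lintegral {F B : ι → α → ℝ≥0∞} {b : α → ℝ≥0∞}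
    (hF : ∀ i, AEMeasurable (F i) μ) (hB : ∀ i, AEMeasurable (B i) μ)
    (hFB : ∀ i, F i ≤ᵐ[μ] B i) (hF_lim : ∀ᵐ a ∂μ, Tendsto (F · a) l (𝓝 0))
    (hB_lim : ∀ᵐ a ∂μ, Tendsto (B · a) l (𝓝 (b a)))
    (hB_int : Tendsto (fun i ↦ ∫⁻ a, B i a ∂μ) l (𝓝 (∫⁻ a, b a ∂μ)))
    (hb : ∫⁻ a, b a ∂μ ≠ ∞) :
    Tendsto (fun i ↦ ∫⁻ a, F i a ∂μ) l (𝓝 0) := by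
  set L := ∫⁻ a, b a ∂μ
  have h_liminf : L ≤ liminf (fun i ↦ ∫⁻ a, B i a - F i a ∂μ) l :=
    calc L = ∫⁻ a, liminf (fun i ↦ B i a - F i a) l ∂μ := by
          refine lintegral_congr_ae ?_
          filter_upwards [hF_lim, hB_lim] with a hFa hBa
          simpa using ((ENNReal.Tendsto.sub hBa hFa (Or.inr ENNReal.zero_ne_top)).liminf_eq).symm
      _ ≤ _ := lintegral_liminf_le' fun i ↦ (hB i).sub (hF i)
  have h_limsup : limsup (fun i ↦ ∫⁻ a, B i a - F i a ∂μ) l ≤ L :=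
    (limsup_le_limsup (.of_forall fun i ↦ lintegral_mono fun a ↦ tsub_le_self)).trans_eq
      hB_int.limsup_eq
  have h_sub : Tendsto (fun i ↦ ∫⁻ a, B i a - F i a ∂μ) l (𝓝 L) :=
    tendsto_of_le_liminf_of_limsup_le h_liminf h_limsup
  have h_eq : ∀ᶠ i in l, ∫⁻ a, B i a ∂μ - ∫⁻ a, B i a - F i a ∂μ = ∫⁻ a, F i a ∂μ := by
    filter_upwards [hB_int.eventually_lt_const (lt_top_iff_ne_top.2 hb)] with i hi
    have hFi : ∫⁻ a, F i a ∂μ ≤ ∫⁻ a, B i a ∂μ := lintegral_mono_ae (hFB i)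
    rw [lintegral_sub' (hF i) (ne_top_of_le_ne_top hi.ne hFi) (hFB i),
      ENNReal.sub_sub_cancel hi.ne hFi]
  simpa using (ENNReal.Tendsto.sub hB_int h_sub (Or.inl hb)).congr' h_eq

theorem tendsto_lintegral_enorm_sub_rpow_of_tendsto_lintegral_enorm_rpow {E : Type*}
    [NormedAddCommGroup E] {p : ℝ} (hp : 1 ≤ p) {g : ι → α → E} {g₀ : α → E}
    (hg : ∀ i, AEStronglyMeasurable (g i) μ) (hg₀ : AEStronglyMeasurable g₀ μ)
    (h_lim : ∀ᵐ a ∂μ, Tendsto (g · a) l (𝓝 (g₀ a)))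
    (h_norm : Tendsto (fun i ↦ ∫⁻ a, ‖g i a‖ₑ ^ p ∂μ) l (𝓝 (∫⁻ a, ‖g₀ a‖ₑ ^ p ∂μ)))
    (h_fin : ∫⁻ a, ‖g₀ a‖ₑ ^ p ∂μ ≠ ∞) :
    Tendsto (fun i ↦ ∫⁻ a, ‖g i a - g₀ a‖ₑ ^ p ∂μ) l (𝓝 0) := by
  have hp0 : 0 < p := zero_lt_one.trans_le hp
  set C : ℝ≥0∞ := 2 ^ (p - 1)
  have hC : C ≠ ∞ := ENNReal.rpow_ne_top_of_nonneg (by linarith) ENNReal.ofNat_ne_top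
  have h_meas : ∀ {h : α → E}, AEStronglyMeasurable h μ → AEMeasurable (‖h ·‖ₑ ^ p) μ :=
    fun hh ↦ hh.enorm.pow_const p
  have h_pow : Continuous fun x : ℝ≥0∞ ↦ x ^ p := ENNReal.continuous_rpow_const
  refine tendsto_lintegral_zero_of_le_of_tendsto_lintegral
    (B := fun i a ↦ C * (‖g i a‖ₑ ^ p + ‖g₀ a‖ₑ ^ p))
    (b := fun a ↦ C * (‖g₀ a‖ₑ ^ p + ‖g₀ a‖ₑ ^ p))
    (fun i ↦ h_meas ((hg i).sub hg₀)) (fun i ↦ ((h_meas (hg i)).add (h_meas hg₀)).const_mul C)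
    (fun i ↦ .of_forall fun a ↦ ?_) ?_ ?_ ?_ ?_
  · calc ‖g i a - g₀ a‖ₑ ^ p ≤ (‖g i a‖ₑ + ‖g₀ a‖ₑ) ^ p :=
          ENNReal.rpow_le_rpow enorm_sub_le hp0.le
      _ ≤ C * (‖g i a‖ₑ ^ p + ‖g₀ a‖ₑ ^ p) := ENNReal.rpow_add_le_mul_rpow_add_rpow _ _ hp
  · filter_upwards [h_lim] with a ha
    have h := (h_pow.tendsto _).comp (tendsto_sub_nhds_zero_iff.2 ha).enorm
    rwa [enorm_zero, ENNReal.zero_rpow_of_pos hp0] at h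
  · filter_upwards [h_lim] with a ha
    exact ENNReal.Tendsto.const_mul
      (((h_pow.tendsto _).comp ha.enorm).add tendsto_const_nhds) (Or.inr hC)
  · simp only [lintegral_const_mul' C _ hC, lintegral_add_right' _ (h_meas hg₀)]
    exact ENNReal.Tendsto.const_mul (h_norm.add tendsto_const_nhds) (Or.inr hC)
  · rw [lintegral_const_mul' C _ hC, lintegral_add_right' _ (h_meas hg₀)]
    exact ENNReal.mul_ne_top hC (ENNReal.add_ne_top.2 ⟨h_fin, h_fin⟩)

end GeneralizedDominatedConvergence

section Dilation

variable {E : Type*} [NormedAddCommGroup E] [NormedSpace ℝ E] [FiniteDimensional ℝ E]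
  [MeasurableSpace E] [BorelSpace E] (μ : Measure E) [μ.IsAddHaarMeasure]

theorem lintegral_comp_smul (k : E → ℝ≥0∞) {r : ℝ} (hr : r ≠ 0) :
    ∫⁻ z, k (r • z) ∂μ = ENNReal.ofReal |(r ^ finrank ℝ E)⁻¹| * ∫⁻ z, k z ∂μ := by
  rw [← smul_eq_mul, ← lintegral_smul_measure, ← Measure.map_addHaar_smul μ hr]
  exact (lintegral_map_equiv k (Homeomorph.smul (Units.mk0 r hr)).toMeasurableEquiv).symm

theorem tendsto_lintegral_comp_smul_withDensity {h w : E → ℝ≥0∞} (hh : Measurable h)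
    (hh_fin : ∀ᵐ z ∂μ, h z ≠ ∞) (hw : Continuous w)
    (hw_anti : ∀ z, ∀ t : ℝ, 1 ≤ t → w (t • z) ≤ w z) (h_fin : ∫⁻ z, h z ∂μ.withDensity w ≠ ∞) :
    Tendsto (fun r : ℝ ↦ ∫⁻ z, h (r • z) ∂μ.withDensity w) (𝓝[<] 1)
      (𝓝 (∫⁻ z, h z ∂μ.withDensity w)) := by
  have h_density : ∀ r : ℝ, ∫⁻ z, h (r • z) ∂μ.withDensity w = ∫⁻ z, w z * h (r • z) ∂μ :=
    fun r ↦ lintegral_withDensity_eq_lintegral_mul _ hw.measurable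
      (hh.comp (measurable_const_smul r))
  rw [lintegral_withDensity_eq_lintegral_mul _ hw.measurable hh] at h_fin ⊢
  simp only [h_density]
  have h_pos : ∀ᶠ r in 𝓝[<] (1 : ℝ), r ∈ Set.Ioo 0 1 := Ioo_mem_nhdsLT zero_lt_one
  have h_eq : ∀ᶠ r in 𝓝[<] (1 : ℝ), ENNReal.ofReal |(r ^ finrank ℝ E)⁻¹| *
      ∫⁻ z, w (r⁻¹ • z) * h z ∂μ = ∫⁻ z, w z * h (r • z) ∂μ := by
    filter_upwards [h_pos] with r hr
    rw [← lintegral_comp_smul μ (fun z ↦ w (r⁻¹ • z) * h z) hr.1.ne']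
    simp [smul_smul, inv_mul_cancel₀ hr.1.ne']
  have h_factor : Tendsto (fun r : ℝ ↦ ENNReal.ofReal |(r ^ finrank ℝ E)⁻¹|) (𝓝[<] 1) (𝓝 1) := by
    have : ContinuousAt (fun r : ℝ ↦ |(r ^ finrank ℝ E)⁻¹|) 1 := by fun_prop (disch := simp)
    simpa using (ENNReal.tendsto_ofReal this.tendsto).mono_left nhdsWithin_le_nhds
  have h_int : Tendsto (fun r : ℝ ↦ ∫⁻ z, w (r⁻¹ • z) * h z ∂μ) (𝓝[<] 1)
      (𝓝 (∫⁻ z, w z * h z ∂μ)) := by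
    refine tendsto_lintegral_filter_of_dominated_convergence (fun z ↦ w z * h z)
      (.of_forall fun r ↦ (hw.comp (continuous_const_smul r⁻¹)).measurable.mul hh) ?_ h_fin ?_
    · filter_upwards [h_pos] with r hr
      exact .of_forall fun z ↦ mul_le_mul_left (hw_anti z r⁻¹ (one_le_inv₀ hr.1 |>.2 hr.2.le)) _
    · filter_upwards [hh_fin] with z hz
      refine ENNReal.Tendsto.mul_const ((hw.tendsto z).comp ?_) (Or.inr hz)
      have : ContinuousAt (fun r : ℝ ↦ r⁻¹ • z) 1 := by fun_prop (disch := simp)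
      simpa using this.tendsto.mono_left nhdsWithin_le_nhds
  simpa using (ENNReal.Tendsto.mul h_factor (Or.inl one_ne_zero) h_int
    (Or.inr ENNReal.one_ne_top)).congr' h_eq

end Dilation

section WeightedNorm

variable {α E : Type*} [MeasurableSpace α] [NormedAddCommGroup E] {μ : Measure α} {W : α → ℝ}
  {p : ℝ}

theorem lintegral_enorm_rpow_withDensity_ofReal (hW : Measurable W) (hp : 0 ≤ p) (g : α → E) :
    ∫⁻ x, ‖g x‖ₑ ^ p ∂μ.withDensity (fun x ↦ ENNReal.ofReal (W x)) =
      ∫⁻ x, ENNReal.ofReal (‖g x‖ ^ p * W x) ∂μ := by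
  rw [lintegral_withDensity_eq_lintegral_mul_non_measurable _ hW.ennreal_ofReal
    (.of_forall fun _ ↦ ENNReal.ofReal_lt_top)]
  refine lintegral_congr fun x ↦ ?_
  rw [Pi.mul_apply, mul_comm, ENNReal.ofReal_mul (by positivity),
    ← ENNReal.ofReal_rpow_of_nonneg (norm_nonneg _) hp, ofReal_norm]

theorem integral_norm_rpow_mul_eq_toReal_lintegral_withDensity (hW : Measurable W)
    (hW_nonneg : ∀ x, 0 ≤ W x) (hp : 0 ≤ p) {g : α → E} (hg : AEStronglyMeasurable g μ) :
    ∫ x, ‖g x‖ ^ p * W x ∂μ =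
      (∫⁻ x, ‖g x‖ₑ ^ p ∂μ.withDensity (fun x ↦ ENNReal.ofReal (W x))).toReal := by
  rw [lintegral_enorm_rpow_withDensity_ofReal hW hp,
    integral_eq_lintegral_of_nonneg_ae
      (.of_forall fun x ↦ mul_nonneg (by positivity) (hW_nonneg x)) (by fun_prop)]

end WeightedNorm

theorem exp_mul_norm_smul_sq_le {E : Type*} [SeminormedAddCommGroup E] [NormedSpace ℝ E] {c : ℝ}
    (hc : c ≤ 0) (z : E) {t : ℝ} (ht : 1 ≤ t) :
    Real.exp (c * ‖t • z‖ ^ 2 / 2) ≤ Real.exp (c * ‖z‖ ^ 2 / 2) := by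
  have h_norm : ‖z‖ ≤ ‖t • z‖ := by
    rw [norm_smul, Real.norm_of_nonneg (by linarith)]
    exact le_mul_of_one_le_left (norm_nonneg z) ht
  have := mul_le_mul_of_nonpos_left (pow_le_pow_left₀ (norm_nonneg z) h_norm 2) hc
  exact Real.exp_le_exp.2 (by linarith)

theorem fock_dilation_convergence (α p : ℝ) (hα : 0 < α) (hp : 1 ≤ p)
    (f : ℂ → ℂ) (hf : Continuous f)
    (hint : Integrable (fun z : ℂ => ‖f z‖ ^ p * Real.exp (-α * p * ‖z‖ ^ 2 / 2))) :
    Filter.Tendsto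
      (fun r : ℝ => ∫ z : ℂ, ‖f (r • z) - f z‖ ^ p * Real.exp (-α * p * ‖z‖ ^ 2 / 2))
      (nhdsWithin 1 (Set.Ioo (0 : ℝ) 1)) (nhds 0) := by
  have hp0 : 0 ≤ p := zero_le_one.trans hp
  set W : ℂ → ℝ := fun z ↦ Real.exp (-α * p * ‖z‖ ^ 2 / 2)
  have hW : Continuous W := by fun_prop
  set μ := volume.withDensity fun z ↦ ENNReal.ofReal (W z)
  have h_fin : ∫⁻ z, ‖f z‖ₑ ^ p ∂μ ≠ ∞ :=
    (lintegral_enorm_rpow_withDensity_ofReal hW.measurable hp0 f).trans_ne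
      hint.lintegral_lt_top.ne
  have h_norm : Tendsto (fun r : ℝ ↦ ∫⁻ z, ‖f (r • z)‖ₑ ^ p ∂μ) (𝓝[<] 1)
      (𝓝 (∫⁻ z, ‖f z‖ₑ ^ p ∂μ)) :=
    tendsto_lintegral_comp_smul_withDensity volume (h := (‖f ·‖ₑ ^ p)) (by fun_prop)
      (.of_forall fun z ↦ by simp [ENNReal.rpow_eq_top_iff, hp0])
      (ENNReal.continuous_ofReal.comp hW)
      (fun z t ht ↦ ENNReal.ofReal_le_ofReal
        (exp_mul_norm_smul_sq_le (by nlinarith) z ht)) h_fin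
  have h_lim : ∀ z : ℂ, Tendsto (fun r : ℝ ↦ f (r • z)) (𝓝[<] 1) (𝓝 (f z)) := fun z ↦ by
    have : ContinuousAt (fun r : ℝ ↦ f (r • z)) 1 := by fun_prop
    simpa using this.tendsto.mono_left nhdsWithin_le_nhds
  have h_conv := tendsto_lintegral_enorm_sub_rpow_of_tendsto_lintegral_enorm_rpow hp
    (g := fun r z ↦ f (r • z)) (fun r ↦ (hf.comp (continuous_const_smul r)).aestronglyMeasurable)
    hf.aestronglyMeasurable (.of_forall h_lim) h_norm h_fin
  refine Tendsto.congr (fun r ↦ (integral_norm_rpow_mul_eq_toReal_lintegral_withDensity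
    hW.measurable (fun _ ↦ (Real.exp_pos _).le) hp0 (by fun_prop)).symm) ?_
  simpa only [ENNReal.toReal_zero, Function.comp_def] using
    ((ENNReal.tendsto_toReal ENNReal.zero_ne_top).comp h_conv).mono_left
      (nhdsWithin_mono _ Set.Ioo_subset_Iio_self)
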